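/- Right unit axiom of graph insertion: let V₁ be a finite set with a distinguished element * ∈ V₁, let g₁ be a simple graph on V₁, and let v be an element not in V₁. Then g₁ ∘_* X_v, where X_v is the one-vertex graph on {v} with no edges, is the single graph (with coefficient 1) obtained from g₁ by relabelling the vertex * as v. (This is one of the unit axioms in the theorem stating that graphs with insertion form an operad.) -/

import Mathlib

/-!
Common framework: a simple graph on a finite vertex set `V ⊆ α` is a finite set of
unordered pairs (`Sym2 α`) of distinct elements of `V`.  The insertion
`g₁ ∘_star g₂` is an element of the free `ℚ`-module `Finset (Sym2 α) →₀ ℚ`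
on the set of edge sets.
-/

open scoped Classical

variable {α : Type*} [DecidableEq α]

/-- The finite edge set `g` is a simple graph on the vertex set `V`. -/
def IsGraphOn (V : Finset α) (g : Finset (Sym2 α)) : Prop :=
  ∀ e ∈ g, ¬ e.IsDiag ∧ ∀ v ∈ e, v ∈ V

/-- The two endpoints of an unordered pair, as a `Finset`. -/
def sym2Finset : Sym2 α → Finset α :=
  Sym2.lift ⟨fun a b => {a, b}, by intro a b; simp [Finset.pair_comm]⟩

/-- Neighbours of `x` in the edge set `g`. -/
def nbrs (g : Finset (Sym2 α)) (x : α) : Finset α :=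
  (g.biUnion sym2Finset).filter fun v => s(x, v) ∈ g

/-- Remove the vertex `x` (and all incident edges) from the edge set `g`. -/
def delG (g : Finset (Sym2 α)) (x : α) : Finset (Sym2 α) :=
  g.filter fun e => x ∉ e

/-- The edges `{v, f v}` obtained from a reconnection map `f : C → V₂`. -/
def newEdges (C V₂ : Finset α) (f : {v // v ∈ C} → {w // w ∈ V₂}) : Finset (Sym2 α) :=
  Finset.univ.image fun v : {v // v ∈ C} => s(v.1, (f v).1)

/-- Insertion `g₁ ∘_star g₂` of a graph `g₂` on the vertex set `V₂` into a graph `g₁`: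
the sum, over all maps `f` from the neighbours of `star` in `g₁` to `V₂`, of the graph
obtained by deleting `star` from `g₁`, adding `g₂`, and reconnecting along `f`. -/
noncomputable def ins (V₂ : Finset α) (star : α) (g₁ g₂ : Finset (Sym2 α)) :
    Finset (Sym2 α) →₀ ℚ :=
  ∑ f : ({v // v ∈ nbrs g₁ star} → {w // w ∈ V₂}),
    Finsupp.single (delG g₁ star ∪ g₂ ∪ newEdges (nbrs g₁ star) V₂ f) 1

/-- Bilinear extension of the insertion to the free module on graphs. -/
noncomputable def insM (V₂ : Finset α) (star : α) (x y : Finset (Sym2 α) →₀ ℚ) :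
    Finset (Sym2 α) →₀ ℚ :=
  x.sum fun g₁ c₁ => y.sum fun g₂ c₂ => (c₁ * c₂) • ins V₂ star g₁ g₂

/-- Relabelling of a graph along a map: each edge `{x, y}` becomes `{σ x, σ y}`. -/
def relabelG (σ : α → α) (g : Finset (Sym2 α)) : Finset (Sym2 α) :=
  g.image (Sym2.map σ)

/-!
With a one-vertex graph inserted there is exactly one reconnection map, so the insertion is a
single graph: `g₁` minus the edges at `star`, plus an edge `{w, v}` for every neighbour `w` of
`star`. Since `g₁` has no loop at `star`, these new edges are exactly the images of the edges
`{star, w}` under the relabelling, while all other edges are fixed by it.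
-/

theorem mem_sym2Finset {e : Sym2 α} {x : α} : x ∈ sym2Finset e ↔ x ∈ e := by
  induction e using Sym2.ind with
  | _ a b => simp [sym2Finset]

theorem mem_nbrs {g : Finset (Sym2 α)} {x w : α} : w ∈ nbrs g x ↔ s(x, w) ∈ g := by
  simp only [nbrs, Finset.mem_filter, Finset.mem_biUnion, and_iff_right_iff_imp]
  exact fun h => ⟨_, h, mem_sym2Finset.2 (Sym2.mem_mk_right x w)⟩

theorem mem_delG {g : Finset (Sym2 α)} {x : α} {e : Sym2 α} : e ∈ delG g x ↔ e ∈ g ∧ x ∉ e :=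
  Finset.mem_filter

theorem newEdges_const (C V₂ : Finset α) (w : {w // w ∈ V₂}) :
    newEdges C V₂ (fun _ => w) = C.image fun x => s(x, w.1) := by
  ext e
  simp [newEdges]

theorem ins_singleton (v star : α) (g₁ g₂ : Finset (Sym2 α)) :
    ins {v} star g₁ g₂
      = Finsupp.single (delG g₁ star ∪ g₂ ∪ (nbrs g₁ star).image fun w => s(w, v)) 1 := by
  rw [ins, Fintype.sum_unique, ← newEdges_const _ {v} ⟨v, Finset.mem_singleton_self v⟩]
  rfl

theorem Sym2.map_ite_eq_self {star v : α} {e : Sym2 α} (he : star ∉ e) :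
    e.map (fun x => if x = star then v else x) = e := by
  calc e.map _ = e.map id := Sym2.map_congr fun x hx => if_neg (ne_of_mem_of_not_mem hx he)
    _ = e := by rw [Sym2.map_id, id]

theorem relabelG_ite_eq_delG_union (g : Finset (Sym2 α)) (star v : α) (hloop : s(star, star) ∉ g) :
    relabelG (fun x => if x = star then v else x) g
      = delG g star ∪ (nbrs g star).image fun w => s(w, v) := by
  ext e
  simp only [relabelG, Finset.mem_image, Finset.mem_union, mem_delG, mem_nbrs]
  constructor
  · rintro ⟨e, he, rfl⟩
    by_cases hstar : star ∈ e
    · obtain ⟨w, rfl⟩ := Sym2.mem_iff_exists.1 hstar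
      have hw : w ≠ star := by rintro rfl; exact hloop he
      exact Or.inr ⟨w, he, by simp [hw, Sym2.eq_swap]⟩
    · exact Or.inl (by rw [Sym2.map_ite_eq_self hstar]; exact ⟨he, hstar⟩)
  · rintro (⟨he, hstar⟩ | ⟨w, hw, rfl⟩)
    · exact ⟨e, he, Sym2.map_ite_eq_self hstar⟩
    · have hw' : w ≠ star := by rintro rfl; exact hloop hw
      exact ⟨s(star, w), hw, by simp [hw', Sym2.eq_swap]⟩

theorem right_unit_axiom_of_graph_insertion_general
    (V₁ : Finset α) (star : α)
    (g₁ : Finset (Sym2 α)) (hg₁ : IsGraphOn V₁ g₁)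
    (v : α) :
    ins ({v} : Finset α) star g₁ (∅ : Finset (Sym2 α))
      = Finsupp.single (relabelG (fun x => if x = star then v else x) g₁) 1 := by
  have hloop : s(star, star) ∉ g₁ := fun h => (hg₁ _ h).1 (Sym2.mk_isDiag_iff.2 rfl)
  rw [ins_singleton, Finset.union_empty, relabelG_ite_eq_delG_union g₁ star v hloop]

/-- **Right unit axiom of graph insertion**: inserting the one-vertex, edgeless graph on
`{v}` at a vertex `star` of `g₁` gives the single graph obtained from `g₁` by relabelling
the vertex `star` as `v`, with coefficient `1`. -/
theorem right_unit_axiom_of_graph_insertion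
    (V₁ : Finset α) (star : α) (hstar : star ∈ V₁)
    (g₁ : Finset (Sym2 α)) (hg₁ : IsGraphOn V₁ g₁)
    (v : α) (hv : v ∉ V₁) :
    ins ({v} : Finset α) star g₁ (∅ : Finset (Sym2 α))
      = Finsupp.single (relabelG (fun x => if x = star then v else x) g₁) 1 :=
  right_unit_axiom_of_graph_insertion_general V₁ star g₁ hg₁ v
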